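/- Let β ≥ max_{[0,R]} V^+ and |n| ≥ 1. Then for all u ∈ H with ‖u‖_H^2 = 1/(2R^2), the action I_β(u) = (1/2)∫_0^R { r u_r^2 + (n^2/r) u^2 + (β − V) r u^2 − (r/2) u^4 } dr satisfies I_β(u) ≥ 1/(8R^2). -/

import Mathlib

/-!
Writing `E(u) = ∫₀ᴿ (r u_r² + u²/r) dr` for the weighted energy, the fundamental theorem of calculus
and `|2 u u_r| ≤ r u_r² + u²/r` give `u(r)² ≤ E(u) = 1/(2R²)` on `[0, R]`. Hence the quartic term
is controlled by the singular one: `(r/2) u⁴ ≤ r u²/(4R²) ≤ u²/(4r)`. Since `n² ≥ 1` and `β ≥ V`,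
the integrand of `2 I_β(u)` is at least `3/4` of the energy density, so
`I_β(u) ≥ 3 E(u) / 8 = 3/(16R²) ≥ 1/(8R²)`.
-/

open MeasureTheory Set

/-- The action functional `I_β`. -/
noncomputable def actionIbeta (R : ℝ) (n : ℤ) (V : ℝ → ℝ) (β : ℝ) (u u' : ℝ → ℝ) : ℝ :=
  (1/2) * ∫ r in Ioo (0:ℝ) R,
    (r * u' r ^ 2 + ((n:ℝ)^2 / r) * u r ^ 2 + (β - V r) * r * u r ^ 2 - r / 2 * u r ^ 4)

noncomputable def radialEnergyDensity (u u' : ℝ → ℝ) (s : ℝ) : ℝ :=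
  s * u' s ^ 2 + u s ^ 2 / s

lemma abs_two_mul_mul_le_mul_sq_add_sq_div {s : ℝ} (hs : 0 < s) (a b : ℝ) :
    |2 * a * b| ≤ s * b ^ 2 + a ^ 2 / s := by
  have hplus : s * b ^ 2 + a ^ 2 / s + 2 * a * b = (s * b + a) ^ 2 / s := by
    field_simp; ring
  have hminus : s * b ^ 2 + a ^ 2 / s - 2 * a * b = (s * b - a) ^ 2 / s := by
    field_simp; ring
  rw [abs_le]
  constructor <;> linarith [div_nonneg (sq_nonneg (s * b + a)) hs.le,
    div_nonneg (sq_nonneg (s * b - a)) hs.le]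

lemma radialEnergyDensity_nonneg (u u' : ℝ → ℝ) {s : ℝ} (hs : 0 < s) :
    0 ≤ radialEnergyDensity u u' s :=
  (abs_nonneg _).trans (abs_two_mul_mul_le_mul_sq_add_sq_div hs (u s) (u' s))

lemma sq_le_setIntegral_radialEnergyDensity {u u' : ℝ → ℝ} {R r : ℝ}
    (hderiv : ∀ x ∈ Icc (0:ℝ) R, HasDerivAt u (u' x) x) (hu0 : u 0 = 0)
    (hE : IntegrableOn (radialEnergyDensity u u') (Ioo 0 R)) (hr : r ∈ Icc (0:ℝ) R) :
    u r ^ 2 ≤ ∫ s in Ioo (0:ℝ) R, radialEnergyDensity u u' s := by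
  have hsub : Ioo (0:ℝ) r ⊆ Ioo 0 R := Ioo_subset_Ioo_right hr.2
  have hderiv_sq : ∀ x ∈ uIcc (0:ℝ) r, HasDerivAt (fun s => u s ^ 2) (2 * u x * u' x) x := by
    intro x hx
    rw [uIcc_of_le hr.1] at hx
    simpa using (hderiv x ⟨hx.1, hx.2.trans hr.2⟩).fun_pow 2
  have hmeas : AEStronglyMeasurable (fun s => 2 * u s * u' s) (volume.restrict (Ioo (0:ℝ) r)) :=
    (measurable_deriv fun s => u s ^ 2).aestronglyMeasurable.congr <|
      (ae_restrict_iff' measurableSet_Ioo).2 <| ae_of_all _ fun x hx =>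
        (hderiv_sq x (Ioo_subset_Icc_self.trans (uIcc_of_le hr.1).symm.subset hx)).deriv
  have hint : IntegrableOn (fun s => 2 * u s * u' s) (Ioo 0 r) :=
    (hE.mono_set hsub).mono' hmeas <| (ae_restrict_iff' measurableSet_Ioo).2 <|
      ae_of_all _ fun x hx => abs_two_mul_mul_le_mul_sq_add_sq_div hx.1 (u x) (u' x)
  have hftc : ∫ s in Ioo (0:ℝ) r, 2 * u s * u' s = u r ^ 2 := by
    rw [← integral_Ioc_eq_integral_Ioo, ← intervalIntegral.integral_of_le hr.1,
      intervalIntegral.integral_eq_sub_of_hasDerivAt hderiv_sq, hu0]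
    · ring
    · rwa [intervalIntegrable_iff_integrableOn_Ioc_of_le hr.1,
        integrableOn_Ioc_iff_integrableOn_Ioo]
  calc u r ^ 2 = ∫ s in Ioo (0:ℝ) r, 2 * u s * u' s := hftc.symm
    _ ≤ ∫ s in Ioo (0:ℝ) r, radialEnergyDensity u u' s :=
      setIntegral_mono_on hint (hE.mono_set hsub) measurableSet_Ioo fun x hx =>
        (le_abs_self _).trans (abs_two_mul_mul_le_mul_sq_add_sq_div hx.1 (u x) (u' x))
    _ ≤ ∫ s in Ioo (0:ℝ) R, radialEnergyDensity u u' s :=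
      setIntegral_mono_set hE
        ((ae_restrict_iff' measurableSet_Ioo).2 <| ae_of_all _ fun x hx =>
          radialEnergyDensity_nonneg u u' hx.1)
        hsub.eventuallyLE

lemma three_quarters_mul_energy_le_action_integrand {x R c v β a b : ℝ} (hx : 0 < x)
    (hxR : x ≤ R) (hc : 1 ≤ c) (hv : v ≤ β) (ha : a ^ 2 ≤ 1 / (2 * R ^ 2)) :
    3 / 4 * (x * b ^ 2 + a ^ 2 / x) ≤
      x * b ^ 2 + c / x * a ^ 2 + (β - v) * x * a ^ 2 - x / 2 * a ^ 4 := by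
  have ha' : a ^ 2 ≤ 1 / (2 * x ^ 2) :=
    ha.trans (one_div_le_one_div_of_le (by positivity) (by gcongr))
  have hquartic : x / 2 * a ^ 4 ≤ a ^ 2 / x / 4 :=
    calc x / 2 * a ^ 4 = x / 2 * a ^ 2 * a ^ 2 := by ring
      _ ≤ x / 2 * a ^ 2 * (1 / (2 * x ^ 2)) := by gcongr
      _ = a ^ 2 / x / 4 := by field_simp; ring
  have hsingular : a ^ 2 / x ≤ c / x * a ^ 2 := by
    rw [div_mul_eq_mul_div]
    gcongr
    exact le_mul_of_one_le_left (sq_nonneg a) hc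
  have hpotential : 0 ≤ (β - v) * x * a ^ 2 := by
    have : 0 ≤ β - v := sub_nonneg.2 hv
    positivity
  linarith [mul_nonneg hx.le (sq_nonneg b)]

lemma integrableOn_action_integrand {R c β : ℝ} {V u u' : ℝ → ℝ}
    (hV : ContinuousOn V (Icc 0 R)) (hu : ContinuousOn u (Icc 0 R))
    (hE1 : IntegrableOn (fun r => r * u' r ^ 2) (Ioo 0 R))
    (hE2 : IntegrableOn (fun r => u r ^ 2 / r) (Ioo 0 R)) :
    IntegrableOn (fun r => r * u' r ^ 2 + c / r * u r ^ 2 + (β - V r) * r * u r ^ 2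
      - r / 2 * u r ^ 4) (Ioo 0 R) := by
  have hsingular : IntegrableOn (fun r => c / r * u r ^ 2) (Ioo 0 R) :=
    IntegrableOn.congr_fun (hE2.const_mul c) (fun r _ => by ring) measurableSet_Ioo
  have hpotential : IntegrableOn (fun r => (β - V r) * r * u r ^ 2) (Ioo 0 R) :=
    (((continuousOn_const.sub hV).mul continuousOn_id).mul (hu.pow 2)).integrableOn_Icc.mono_set
      Ioo_subset_Icc_self
  have hquartic : IntegrableOn (fun r => r / 2 * u r ^ 4) (Ioo 0 R) :=
    ((continuousOn_id.div_const 2).mul (hu.pow 4)).integrableOn_Icc.mono_set Ioo_subset_Icc_self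
  exact ((hE1.add hsingular).add hpotential).sub hquartic

theorem stmt13_general (R : ℝ) (n : ℤ) (hn : 1 ≤ |n|)
    (V : ℝ → ℝ) (hV : ContinuousOn V (Icc 0 R)) (β : ℝ)
    (hβ : ∀ r ∈ Icc (0:ℝ) R, max (V r) 0 ≤ β)
    (u u' : ℝ → ℝ)
    (hderiv : ∀ x ∈ Icc (0:ℝ) R, HasDerivAt u (u' x) x)
    (hu0 : u 0 = 0)
    (hE1 : IntegrableOn (fun r => r * u' r ^ 2) (Ioo 0 R))
    (hE2 : IntegrableOn (fun r => u r ^ 2 / r) (Ioo 0 R))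
    (hnorm : ∫ r in Ioo (0:ℝ) R, (r * u' r ^ 2 + u r ^ 2 / r) = 1 / (2 * R ^ 2)) :
    actionIbeta R n V β u u' ≥ 1 / (8 * R ^ 2) := by
  have hE : IntegrableOn (radialEnergyDensity u u') (Ioo 0 R) := hE1.add hE2
  have hnorm' : ∫ r in Ioo (0:ℝ) R, radialEnergyDensity u u' r = 1 / (2 * R ^ 2) := hnorm
  have hu : ContinuousOn u (Icc 0 R) := fun x hx => (hderiv x hx).continuousAt.continuousWithinAt
  have hn2 : (1:ℝ) ≤ (n:ℝ) ^ 2 :=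
    (one_le_sq_iff_one_le_abs _).2 (by exact_mod_cast hn)
  have hsup : ∀ r ∈ Icc (0:ℝ) R, u r ^ 2 ≤ 1 / (2 * R ^ 2) := fun r hr =>
    hnorm' ▸ sq_le_setIntegral_radialEnergyDensity hderiv hu0 hE hr
  have hlower := setIntegral_mono_on (hE.const_mul (3 / 4))
    (integrableOn_action_integrand (c := (n:ℝ) ^ 2) (β := β) hV hu hE1 hE2) measurableSet_Ioo
    fun x hx => three_quarters_mul_energy_le_action_integrand hx.1 hx.2.le hn2
      ((le_max_left _ _).trans (hβ x (Ioo_subset_Icc_self hx))) (hsup x (Ioo_subset_Icc_self hx))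
  rw [integral_const_mul, hnorm', show 3 / 4 * (1 / (2 * R ^ 2)) = 3 * (R ^ 2)⁻¹ / 8 by ring]
    at hlower
  rw [actionIbeta, ge_iff_le, show 1 / (8 * R ^ 2) = (R ^ 2)⁻¹ / 8 by ring]
  have : 0 ≤ (R ^ 2)⁻¹ := by positivity
  linarith

/-- mountain-pass lower bound: if `β ≥ max V⁺` and `|n| ≥ 1`, then
`I_β(u) ≥ 1/(8R²)` for all `u ∈ H` with `‖u‖_H² = 1/(2R²)`. -/
theorem stmt13 (R : ℝ) (hR : 0 < R) (n : ℤ) (hn : 1 ≤ |n|)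
    (V : ℝ → ℝ) (hV : ContinuousOn V (Icc 0 R)) (β : ℝ)
    (hβ : ∀ r ∈ Icc (0:ℝ) R, max (V r) 0 ≤ β)
    (u u' : ℝ → ℝ)
    (hderiv : ∀ x ∈ Icc (0:ℝ) R, HasDerivAt u (u' x) x)
    (hu0 : u 0 = 0) (huR : u R = 0)
    (hE1 : IntegrableOn (fun r => r * u' r ^ 2) (Ioo 0 R))
    (hE2 : IntegrableOn (fun r => u r ^ 2 / r) (Ioo 0 R))
    (hnorm : ∫ r in Ioo (0:ℝ) R, (r * u' r ^ 2 + u r ^ 2 / r) = 1 / (2 * R ^ 2)) :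
    actionIbeta R n V β u u' ≥ 1 / (8 * R ^ 2) :=
  stmt13_general R n hn V hV β hβ u u' hderiv hu0 hE1 hE2 hnorm
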